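/- Let f be a rational map of the Riemann sphere of degree d ≥ 2, and suppose E ⊆ OnePoint ℂ is a finite set that is completely invariant under f (f ⁻¹' E = E and f '' E = E). Then E has at most two elements. -/

import Mathlib

open Polynomial Set Metric Filter MeasureTheory

noncomputable instance : UniformSpace (OnePoint ℂ) := uniformSpaceOfCompactR1

/-- `f` is a rational map of the Riemann sphere `OnePoint ℂ` of degree `d`:
`f` is continuous and given by `z ↦ P z / Q z` for coprime polynomials `P, Q`,
not both constant, with `Q ≠ 0` and `d = max (natDegree P) (natDegree Q)`. -/
def IsRationalMap (f : OnePoint ℂ → OnePoint ℂ) (d : ℕ) : Prop :=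
  Continuous f ∧ ∃ P Q : Polynomial ℂ, IsCoprime P Q ∧
    ¬(P.natDegree = 0 ∧ Q.natDegree = 0) ∧ Q ≠ 0 ∧ d = max P.natDegree Q.natDegree ∧
    ∀ z : ℂ, Q.eval z ≠ 0 → f (z : OnePoint ℂ) = ((P.eval z / Q.eval z : ℂ) : OnePoint ℂ)

/-- The Fatou set of `f` : the set of points having an open neighbourhood on which the family
of iterates of `f` is equicontinuous (w.r.t. the canonical uniformity of `OnePoint ℂ`). -/
def FatouSet (f : OnePoint ℂ → OnePoint ℂ) : Set (OnePoint ℂ) :=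
  {x | ∃ U : Set (OnePoint ℂ), IsOpen U ∧ x ∈ U ∧ EquicontinuousOn (fun n : ℕ => f^[n]) U}

/-- The Julia set of `f` : the complement of the Fatou set. -/
def JuliaSet (f : OnePoint ℂ → OnePoint ℂ) : Set (OnePoint ℂ) :=
  (FatouSet f)ᶜ

/-!
Since `E` is finite and completely invariant, `f` permutes `E`, so each `a ∈ E` is the only
preimage of `f a`: `f` is totally ramified at `a`. Writing `f = P / Q`, ramification is measured
by the Wronskian `W = P Q' - P' Q`, a nonzero polynomial of degree at most `2d - 2`. Total
ramification at a finite point `z` gives `(X - z) ^ (d - 1) ∣ W`, and at `∞` it gives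
`deg W ≤ d - 1`: the fibre over `f a` is cut out by a member `P - w Q` (or `Q`) of the pencil,
which must then be `c (X - z) ^ d`, resp. a constant, and `W` is its Wronskian with a partner of
degree at most `d`. So `E` contains at most two finite points, and at most one if `∞ ∈ E`.
-/

open Topology OnePoint

theorem OnePoint.tendsto_coe_cobounded {X : Type*} [MetricSpace X] [ProperSpace X] :
    Tendsto ((↑) : X → OnePoint X) (Bornology.cobounded X) (𝓝 ∞) := by
  rw [cobounded_eq_cocompact, ← coclosedCompact_eq_cocompact]
  exact tendsto_coe_infty

theorem OnePoint.encard_eq_encard_preimage_coe_add {X : Type*} (E : Set (OnePoint X)) :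
    E.encard = ((↑) ⁻¹' E : Set X).encard + (E ∩ {∞}).encard := by
  rw [← coe_injective.encard_image (OnePoint.some ⁻¹' E), image_preimage_eq_inter_range,
    ← compl_infty, ← sdiff_eq, encard_sdiff_add_encard_inter]

theorem Set.Finite.preimage_singleton_apply_eq {α : Type*} {f : α → α} {E : Set α}
    (hE : E.Finite) (hpre : f ⁻¹' E = E) (him : f '' E = E) {a : α} (ha : a ∈ E) :
    f ⁻¹' {f a} = {a} := by
  have hinj : InjOn f E :=
    ((hE.surjOn_iff_bijOn_of_mapsTo hpre.symm.subset).1 him.symm.subset).injOn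
  ext x
  refine ⟨fun hx ↦ hinj (hpre.subset ?_) ha hx, fun hx ↦ congrArg f hx⟩
  rw [mem_preimage, mem_singleton_iff.1 hx]
  exact hpre.symm.subset ha

/-- The point `[p : q]` of the projective line `OnePoint ℂ`, with junk value `∞` at `(0, 0)`. -/
noncomputable def projPoint (p q : ℂ) : OnePoint ℂ :=
  if q = 0 then ∞ else ↑(p / q)

theorem tendsto_coe_div_projPoint {α : Type*} {l : Filter α} {a b : α → ℂ} {p q : ℂ}
    (ha : Tendsto a l (𝓝 p)) (hb : Tendsto b l (𝓝 q)) (hb0 : ∀ᶠ x in l, b x ≠ 0)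
    (hpq : p ≠ 0 ∨ q ≠ 0) :
    Tendsto (fun x ↦ ((a x / b x : ℂ) : OnePoint ℂ)) l (𝓝 (projPoint p q)) := by
  by_cases hq : q = 0
  · have hp : p ≠ 0 := hpq.resolve_right (not_not.2 hq)
    have hba : Tendsto (fun x ↦ b x / a x) l (𝓝[≠] 0) := by
      refine tendsto_nhdsWithin_iff.2 ⟨?_, ?_⟩
      · rw [← zero_div p, ← hq]
        exact hb.div ha hp
      · filter_upwards [hb0, ha.eventually_ne hp] with x hbx hax using div_ne_zero hbx hax
    rw [projPoint, if_pos hq]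
    refine (tendsto_coe_cobounded.comp (tendsto_inv₀_nhdsNE_zero.comp hba)).congr fun x ↦ ?_
    simp [inv_div]
  · rw [projPoint, if_neg hq]
    exact (continuous_coe.tendsto _).comp (ha.div hb hq)

namespace Polynomial

theorem eventually_eval_ne_zero_nhdsNE {K : Type*} [Field K] [TopologicalSpace K] [T1Space K]
    {S : K[X]} (hS : S ≠ 0) (z : K) : ∀ᶠ w in 𝓝[≠] z, S.eval w ≠ 0 :=
  nhdsNE_le_cofinite z (S.finite_setOfPred_isRoot hS).compl_mem_cofinite

theorem eval_reflect {K : Type*} [Field K] {P : K[X]} {N : ℕ} (hP : P.natDegree ≤ N) {w : K}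
    (hw : w ≠ 0) : (reflect N P).eval w = w ^ N * P.eval w⁻¹ := by
  let := invertibleOfNonzero (inv_ne_zero hw)
  have := eval₂_reflect_mul_pow (RingHom.id K) w⁻¹ N P hP
  rw [invOf_eq_inv, inv_inv] at this
  rw [eval, eval, ← this, mul_left_comm, ← mul_pow, mul_inv_cancel₀ hw, one_pow, mul_one]

theorem coeff_max_natDegree_ne_zero {R : Type*} [Semiring R] {P Q : R[X]}
    (hnc : ¬(P.natDegree = 0 ∧ Q.natDegree = 0)) :
    P.coeff (max P.natDegree Q.natDegree) ≠ 0 ∨ Q.coeff (max P.natDegree Q.natDegree) ≠ 0 := by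
  rcases le_total Q.natDegree P.natDegree with h | h
  · refine .inl ?_
    rw [max_eq_left h, coeff_natDegree, leadingCoeff_ne_zero]
    rintro rfl
    exact hnc ⟨natDegree_zero, by simpa using h⟩
  · refine .inr ?_
    rw [max_eq_right h, coeff_natDegree, leadingCoeff_ne_zero]
    rintro rfl
    exact hnc ⟨by simpa using h, natDegree_zero⟩

theorem pow_natDegree_dvd_of_forall_root_eq {k : Type*} [Field k] [IsAlgClosed k] {A : k[X]}
    {z : k} (h : ∀ u, A.eval u = 0 → u = z) : (X - C z) ^ A.natDegree ∣ A := by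
  rcases eq_or_ne A 0 with rfl | hA
  · exact dvd_zero _
  classical
  have hroots : A.roots.count z = A.roots.card :=
    Multiset.count_eq_card.2 fun u hu ↦ (h u (isRoot_of_mem_roots hu)).symm
  rw [← IsAlgClosed.card_roots_eq_natDegree, ← hroots, count_roots]
  exact pow_rootMultiplicity_dvd A z

theorem ncard_mul_le_natDegree_of_pow_dvd {K : Type*} [Field K] {W : K[X]} (hW : W ≠ 0)
    {S : Set K} (hS : S.Finite) {n : ℕ} (h : ∀ z ∈ S, (X - C z) ^ n ∣ W) :
    S.ncard * n ≤ W.natDegree := by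
  have hprod : ∏ z ∈ hS.toFinset, (X - C z) ^ n ∣ W :=
    Finset.prod_dvd_of_coprime
      (fun a _ b _ hab ↦ (pairwise_coprime_X_sub_C Function.injective_id hab).pow)
      fun z hz ↦ h z (hS.mem_toFinset.1 hz)
  have := natDegree_le_of_dvd hprod hW
  rw [natDegree_prod _ _ fun z _ ↦ pow_ne_zero n (X_sub_C_ne_zero z)] at this
  simpa [Set.ncard_eq_toFinset_card S hS] using this

theorem pow_sub_one_dvd_wronskian_of_pow_dvd {R : Type*} [CommRing R] {p A : R[X]} {n : ℕ}
    (h : p ^ n ∣ A) (B : R[X]) : p ^ (n - 1) ∣ wronskian A B :=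
  dvd_sub (((pow_dvd_pow p (n.sub_le 1)).trans h).mul_right _)
    ((pow_sub_one_dvd_derivative_of_pow_dvd h).mul_right _)

theorem natDegree_wronskian_C_le {R : Type*} [CommRing R] (c : R) (B : R[X]) :
    (wronskian (C c) B).natDegree ≤ B.natDegree - 1 := by
  rw [wronskian, derivative_C, zero_mul, sub_zero]
  exact (natDegree_C_mul_le _ _).trans (natDegree_derivative_le B)

end Polynomial

/-- The member of the pencil spanned by `P` and `Q` cutting out the fibre over `e` of
`z ↦ [P z : Q z]`. -/
noncomputable def fiberPoly (P Q : ℂ[X]) (e : OnePoint ℂ) : ℂ[X] :=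
  e.elim Q fun w ↦ P - C w * Q

theorem map_fiberPoly_eq_zero_iff {P Q : ℂ[X]} (L : ℂ[X] →ₗ[ℂ] ℂ) (h : L P ≠ 0 ∨ L Q ≠ 0)
    (e : OnePoint ℂ) : L (fiberPoly P Q e) = 0 ↔ projPoint (L P) (L Q) = e := by
  induction e with
  | infty => by_cases hQ : L Q = 0 <;> simp [fiberPoly, projPoint, hQ]
  | coe w =>
    by_cases hQ : L Q = 0
    · simp [fiberPoly, projPoint, hQ, ← smul_eq_C_mul, h.resolve_right (not_not.2 hQ)]
    · simp [fiberPoly, projPoint, hQ, ← smul_eq_C_mul, sub_eq_zero, div_eq_iff hQ]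

theorem natDegree_fiberPoly_le (P Q : ℂ[X]) (e : OnePoint ℂ) :
    (fiberPoly P Q e).natDegree ≤ max P.natDegree Q.natDegree := by
  induction e with
  | infty => exact le_max_right _ _
  | coe w => exact (natDegree_sub_le _ _).trans (max_le_max le_rfl (natDegree_C_mul_le _ _))

theorem exists_wronskian_fiberPoly_eq (P Q : ℂ[X]) (e : OnePoint ℂ) :
    ∃ B : ℂ[X], B.natDegree ≤ max P.natDegree Q.natDegree ∧
      wronskian (fiberPoly P Q e) B = wronskian P Q := by
  induction e with
  | infty =>
    refine ⟨-P, by simp, ?_⟩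
    rw [fiberPoly, OnePoint.elim_infty, wronskian_neg_right, wronskian_neg_eq]
  | coe w =>
    refine ⟨Q, le_max_right _ _, ?_⟩
    simp only [fiberPoly, OnePoint.elim_some, wronskian, derivative_sub, derivative_C_mul]
    ring

theorem natDegree_wronskian_le_two_mul_sub_two {P Q : ℂ[X]}
    (hnc : ¬(P.natDegree = 0 ∧ Q.natDegree = 0)) (hW : wronskian P Q ≠ 0) :
    (wronskian P Q).natDegree ≤ 2 * max P.natDegree Q.natDegree - 2 := by
  set d := max P.natDegree Q.natDegree
  -- the pencil member through `[P_d : Q_d]` has degree `< d`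
  set e := projPoint (P.coeff d) (Q.coeff d)
  have hAd : (fiberPoly P Q e).natDegree ≤ d - 1 :=
    natDegree_le_pred (natDegree_fiberPoly_le P Q e)
      ((map_fiberPoly_eq_zero_iff (lcoeff ℂ d) (coeff_max_natDegree_ne_zero hnc) e).2 rfl)
  obtain ⟨B, hBd, hB⟩ := exists_wronskian_fiberPoly_eq P Q e
  have := natDegree_wronskian_lt_add (hB ▸ hW)
  rw [hB] at this
  omega

structure IsRationalMapOf (f : OnePoint ℂ → OnePoint ℂ) (P Q : ℂ[X]) : Prop where
  continuous : Continuous f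
  isCoprime : IsCoprime P Q
  nonconstant : ¬(P.natDegree = 0 ∧ Q.natDegree = 0)
  ne_zero : Q ≠ 0
  apply_coe : ∀ z : ℂ, Q.eval z ≠ 0 → f z = ↑(P.eval z / Q.eval z)

namespace IsRationalMapOf

variable {f : OnePoint ℂ → OnePoint ℂ} {P Q : ℂ[X]}

theorem apply_coe_eq_projPoint (hf : IsRationalMapOf f P Q) (z : ℂ) :
    f z = projPoint (P.eval z) (Q.eval z) := by
  have hPQ : P.eval z ≠ 0 ∨ Q.eval z ≠ 0 := by
    simpa using aeval_ne_zero_of_isCoprime hf.isCoprime z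
  have hQ := eventually_eval_ne_zero_nhdsNE hf.ne_zero z
  have hlim := tendsto_coe_div_projPoint P.continuous.continuousWithinAt
    Q.continuous.continuousWithinAt hQ hPQ
  refine tendsto_nhds_unique (f := fun w : ℂ ↦ f w) ((hf.continuous.tendsto _).comp ?_)
    (hlim.congr' ?_)
  · exact (continuous_coe.tendsto z).mono_left nhdsWithin_le_nhds
  · filter_upwards [hQ] with w hw using (hf.apply_coe w hw).symm

theorem apply_infty_eq_projPoint (hf : IsRationalMapOf f P Q) :
    f ∞ = projPoint (P.coeff (max P.natDegree Q.natDegree))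
      (Q.coeff (max P.natDegree Q.natDegree)) := by
  set d := max P.natDegree Q.natDegree
  -- `reflect d P` is `w ↦ w ^ d * P (1 / w)`, so `f ∞` is the value at `w = 0` of the quotient
  have hS := eventually_eval_ne_zero_nhdsNE (reflect_eq_zero_iff (N := d).not.2 hf.ne_zero) 0
  have hlim := tendsto_coe_div_projPoint (reflect d P).continuous.continuousWithinAt
    (reflect d Q).continuous.continuousWithinAt hS
    (by simpa [← coeff_zero_eq_eval_zero, coeff_reflect] using
      coeff_max_natDegree_ne_zero hf.nonconstant)
  simp only [← coeff_zero_eq_eval_zero, coeff_reflect, revAt_zero] at hlim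
  refine tendsto_nhds_unique (f := fun w : ℂ ↦ f ↑w⁻¹) ((hf.continuous.tendsto _).comp
    (tendsto_coe_cobounded.comp tendsto_inv₀_nhdsNE_zero)) (hlim.congr' ?_)
  filter_upwards [hS, self_mem_nhdsWithin] with w hSw hw
  rw [eval_reflect (le_max_left P.natDegree _) hw,
    eval_reflect (le_max_right _ Q.natDegree) hw] at *
  rw [hf.apply_coe _ (right_ne_zero_of_mul hSw), mul_div_mul_left _ _ (pow_ne_zero _ hw)]

theorem apply_coe_eq_iff (hf : IsRationalMapOf f P Q) (z : ℂ) (e : OnePoint ℂ) :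
    f z = e ↔ (fiberPoly P Q e).eval z = 0 := by
  rw [hf.apply_coe_eq_projPoint]
  exact (map_fiberPoly_eq_zero_iff (leval z)
    (by simpa using aeval_ne_zero_of_isCoprime hf.isCoprime z) e).symm

theorem apply_infty_eq_iff (hf : IsRationalMapOf f P Q) (e : OnePoint ℂ) :
    f ∞ = e ↔ (fiberPoly P Q e).coeff (max P.natDegree Q.natDegree) = 0 := by
  rw [hf.apply_infty_eq_projPoint]
  exact (map_fiberPoly_eq_zero_iff (lcoeff ℂ _) (coeff_max_natDegree_ne_zero hf.nonconstant) e).symm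

theorem wronskian_ne_zero (hf : IsRationalMapOf f P Q) : wronskian P Q ≠ 0 := by
  rw [Ne, hf.isCoprime.wronskian_eq_zero_iff]
  rintro ⟨hP, hQ⟩
  exact hf.nonconstant ⟨derivative_eq_zero.1 hP, derivative_eq_zero.1 hQ⟩

theorem pow_dvd_wronskian_of_preimage_coe (hf : IsRationalMapOf f P Q) {z : ℂ}
    (hfib : f ⁻¹' {f z} = {(z : OnePoint ℂ)}) :
    (X - C z) ^ (max P.natDegree Q.natDegree - 1) ∣ wronskian P Q := by
  set A := fiberPoly P Q (f z)
  have hroots : ∀ u : ℂ, A.eval u = 0 → u = z := fun u hu ↦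
    coe_injective (hfib.subset ((hf.apply_coe_eq_iff u _).2 hu))
  have hdeg : A.natDegree = max P.natDegree Q.natDegree := by
    refine natDegree_eq_of_le_of_coeff_ne_zero (natDegree_fiberPoly_le P Q _) fun h ↦ ?_
    exact infty_ne_coe z (hfib.subset ((hf.apply_infty_eq_iff _).2 h))
  obtain ⟨B, -, hB⟩ := exists_wronskian_fiberPoly_eq P Q (f z)
  rw [← hB, ← hdeg]
  exact pow_sub_one_dvd_wronskian_of_pow_dvd (pow_natDegree_dvd_of_forall_root_eq hroots) B

theorem natDegree_wronskian_le_of_preimage_infty (hf : IsRationalMapOf f P Q)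
    (hfib : f ⁻¹' {f ∞} = {∞}) :
    (wronskian P Q).natDegree ≤ max P.natDegree Q.natDegree - 1 := by
  have hconst : fiberPoly P Q (f ∞) = C ((fiberPoly P Q (f ∞)).coeff 0) := by
    refine IsAlgClosed.roots_eq_zero_iff.1 (Multiset.eq_zero_of_forall_notMem fun u hu ↦ ?_)
    exact coe_ne_infty u (hfib.subset ((hf.apply_coe_eq_iff u _).2 (isRoot_of_mem_roots hu)))
  obtain ⟨B, hBd, hB⟩ := exists_wronskian_fiberPoly_eq P Q (f ∞)
  rw [← hB, hconst]
  exact (natDegree_wronskian_C_le _ B).trans (Nat.sub_le_sub_right hBd 1)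

end IsRationalMapOf

theorem finite_completelyInvariant_encard_le_two
    (f : OnePoint ℂ → OnePoint ℂ) (d : ℕ) (hd : 2 ≤ d) (hf : IsRationalMap f d)
    (E : Set (OnePoint ℂ)) (hEfin : E.Finite)
    (hpre : f ⁻¹' E = E) (him : f '' E = E) :
    E.encard ≤ 2 := by
  obtain ⟨hfc, P, Q, hco, hnc, hQ, rfl, heval⟩ := hf
  have hf : IsRationalMapOf f P Q := ⟨hfc, hco, hnc, hQ, heval⟩
  have hfib (a) (ha : a ∈ E) : f ⁻¹' {f a} = {a} := hEfin.preimage_singleton_apply_eq hpre him ha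
  set Z : Set ℂ := (↑) ⁻¹' E
  have hZ : Z.Finite := hEfin.preimage coe_injective.injOn
  have hcount : Z.ncard * (max P.natDegree Q.natDegree - 1) ≤ (wronskian P Q).natDegree :=
    ncard_mul_le_natDegree_of_pow_dvd hf.wronskian_ne_zero hZ
      fun z hz ↦ hf.pow_dvd_wronskian_of_preimage_coe (hfib _ hz)
  have hdeg := natDegree_wronskian_le_two_mul_sub_two hnc hf.wronskian_ne_zero
  rw [encard_eq_encard_preimage_coe_add, ← hZ.cast_ncard_eq]
  by_cases hinf : ∞ ∈ E
  · have hW := hf.natDegree_wronskian_le_of_preimage_infty (hfib ∞ hinf)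
    have hZ1 : Z.ncard ≤ 1 := Nat.le_of_mul_le_mul_right (by simpa using hcount.trans hW) (by omega)
    have hE1 : (E ∩ {∞}).encard ≤ 1 :=
      (encard_le_encard inter_subset_right).trans (encard_singleton _).le
    calc (Z.ncard : ℕ∞) + (E ∩ {∞}).encard ≤ 1 + 1 := add_le_add (by exact_mod_cast hZ1) hE1
      _ = 2 := one_add_one_eq_two
  · have hZ2 : Z.ncard ≤ 2 :=
      Nat.le_of_mul_le_mul_right (c := max P.natDegree Q.natDegree - 1) (by omega) (by omega)
    simpa [inter_singleton_eq_empty.2 hinf] using hZ2
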